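/- Let k₂ = 1/(8·3^{2/3}). For every integer ν ≥ 1, every acyclic weighted digraph D whose longest directed path has exactly ν vertices satisfies mac(D) ≥ (1/4 + k₂·ν^{−2/3})·w(D). -/

import Mathlib

open scoped BigOperators Classical

noncomputable section

namespace PaperStmt

variable {V : Type*} [Fintype V]

/-- Total weight of a weighted digraph given by `w : V → V → ℝ`. -/
def totalWeight (w : V → V → ℝ) : ℝ := ∑ u, ∑ v, w u v

/-- Weight of the dicut `(X, Xᶜ)`. -/
def cutWeight (w : V → V → ℝ) (X : Finset V) : ℝ := ∑ x ∈ X, ∑ y ∈ Xᶜ, w x y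

/-- Maximum weight of a directed cut. -/
def mac (w : V → V → ℝ) : ℝ :=
  Finset.univ.sup' ⟨∅, Finset.mem_univ ∅⟩ (fun X : Finset V => cutWeight w X)

/-- `r(v) = w⁺(v) - w⁻(v)`. -/
def rv (w : V → V → ℝ) (v : V) : ℝ := (∑ u, w v u) - (∑ u, w u v)

/-- `r⁺(D) = ∑_{v : r(v) > 0} r(v)`. -/
def rPlus (w : V → V → ℝ) : ℝ :=
  ∑ v ∈ Finset.univ.filter (fun v => 0 < rv w v), rv w v

/-- A weighted digraph is acyclic if it has no directed cycle
(along arcs of positive weight). -/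
def Acyclic (w : V → V → ℝ) : Prop :=
  ¬ ∃ (t : ℕ) (f : ℕ → V), 1 ≤ t ∧ f t = f 0 ∧ ∀ i < t, 0 < w (f i) (f (i + 1))

/-- `IsPathOrder w p` : there is a directed path on `p` distinct vertices,
consecutive pairs joined by arcs of positive weight. -/
def IsPathOrder (w : V → V → ℝ) (p : ℕ) : Prop :=
  ∃ f : Fin p → V, Function.Injective f ∧
    ∀ (i : ℕ) (h : i + 1 < p), 0 < w (f ⟨i, Nat.lt_of_succ_lt h⟩) (f ⟨i + 1, h⟩)

/-! ### Pure arithmetic/counting auxiliary lemmas -/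

lemma sum_shift_div (s : ℕ) (hs : 0 < s) : ∀ x : ℕ, ∑ θ ∈ Finset.range s, (x + θ) / s = x := by
  intro x
  induction x with
  | zero =>
    refine Finset.sum_eq_zero fun θ hθ => ?_
    exact Nat.div_eq_of_lt (by simpa using Finset.mem_range.1 hθ)
  | succ x ih =>
    have e1 : ∑ θ ∈ Finset.range (s + 1), (x + θ) / s
        = (∑ θ ∈ Finset.range s, (x + 1 + θ) / s) + x / s := by
      rw [Finset.sum_range_succ' (fun θ => (x + θ) / s) s]
      congr 1
      · refine Finset.sum_congr rfl fun θ _ => ?_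
        congr 1
        omega
    have e2 := Finset.sum_range_succ (fun θ => (x + θ) / s) s
    have e4 : (x + s) / s = x / s + 1 := Nat.add_div_right _ hs
    omega

lemma card_ne_div_le (s : ℕ) (hs : 0 < s) {i j : ℕ} (hij : i ≤ j) :
    ((Finset.range s).filter fun θ => ¬ (i + θ) / s = (j + θ) / s).card ≤ j - i := by
  have h2 : ((Finset.range s).filter fun θ => ¬ (i + θ) / s = (j + θ) / s).card
      = ∑ θ ∈ Finset.range s, (if ¬ (i + θ) / s = (j + θ) / s then 1 else 0) :=
    Finset.card_filter _ _
  have h1 : ∀ θ ∈ Finset.range s, (if ¬ (i + θ) / s = (j + θ) / s then 1 else 0)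
      ≤ (j + θ) / s - (i + θ) / s := by
    intro θ _
    have hm : (i + θ) / s ≤ (j + θ) / s := Nat.div_le_div_right (by omega)
    split_ifs with h
    · omega
    · omega
  have h6 := Finset.sum_le_sum h1
  have h3 : ∑ θ ∈ Finset.range s, ((j + θ) / s - (i + θ) / s)
      + ∑ θ ∈ Finset.range s, (i + θ) / s = ∑ θ ∈ Finset.range s, (j + θ) / s := by
    rw [← Finset.sum_add_distrib]
    refine Finset.sum_congr rfl fun θ _ => ?_
    have hm : (i + θ) / s ≤ (j + θ) / s := Nat.div_le_div_right (by omega)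
    omega
  have h4 := sum_shift_div s hs i
  have h5 := sum_shift_div s hs j
  omega

lemma count_pi_two {ι κ : Type*} [Fintype ι] [DecidableEq ι] [DecidableEq κ]
    (base : Finset κ) {k₁ k₂ : ι} (hk : k₁ ≠ k₂) (P Q : κ → Prop)
    [DecidablePred P] [DecidablePred Q] :
    ((Fintype.piFinset fun _ : ι => base).filter fun f => P (f k₁) ∧ Q (f k₂)).card
      = (base.filter P).card * (base.filter Q).card * base.card ^ (Fintype.card ι - 2) := by
  classical
  have hset : ((Fintype.piFinset fun _ : ι => base).filter fun f => P (f k₁) ∧ Q (f k₂))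
      = Fintype.piFinset (fun i => if i = k₁ then base.filter P
          else if i = k₂ then base.filter Q else base) := by
    ext f
    simp only [Finset.mem_filter, Fintype.mem_piFinset]
    constructor
    · rintro ⟨h1, h2, h3⟩ i
      by_cases hi1 : i = k₁
      · subst hi1
        rw [if_pos rfl]
        exact Finset.mem_filter.2 ⟨h1 i, h2⟩
      · by_cases hi2 : i = k₂
        · subst hi2
          rw [if_neg hi1, if_pos rfl]
          exact Finset.mem_filter.2 ⟨h1 i, h3⟩
        · rw [if_neg hi1, if_neg hi2]
          exact h1 i
    · intro h
      have hb : ∀ i, f i ∈ base := by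
        intro i
        have hh := h i
        split_ifs at hh with h1 h2
        · exact (Finset.mem_filter.1 hh).1
        · exact (Finset.mem_filter.1 hh).1
        · exact hh
      have hk1 := h k₁
      rw [if_pos rfl] at hk1
      have hk2 := h k₂
      rw [if_neg hk.symm, if_pos rfl] at hk2
      exact ⟨hb, (Finset.mem_filter.1 hk1).2, (Finset.mem_filter.1 hk2).2⟩
  rw [hset, Fintype.card_piFinset]
  rw [← Finset.mul_prod_erase Finset.univ _ (Finset.mem_univ k₁)]
  rw [← Finset.mul_prod_erase _ _ (Finset.mem_erase.2 ⟨hk.symm, Finset.mem_univ k₂⟩)]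
  rw [if_pos rfl, if_neg hk.symm, if_pos rfl]
  have hrest : ∀ x ∈ (Finset.univ.erase k₁).erase k₂,
      (if x = k₁ then base.filter P else if x = k₂ then base.filter Q else base).card
        = base.card := by
    intro x hx
    have hx2 := Finset.mem_erase.1 hx
    have hx1 := Finset.mem_erase.1 hx2.2
    rw [if_neg hx1.1, if_neg hx2.1]
  rw [Finset.prod_congr rfl hrest, Finset.prod_const]
  have hcard : ((Finset.univ.erase k₁).erase k₂).card = Fintype.card ι - 2 := by
    rw [Finset.card_erase_of_mem (Finset.mem_erase.2 ⟨hk.symm, Finset.mem_univ k₂⟩),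
      Finset.card_erase_of_mem (Finset.mem_univ k₁), Finset.card_univ]
    omega
  rw [hcard, mul_assoc]

lemma count_pi_one {ι κ : Type*} [Fintype ι] [DecidableEq ι] [DecidableEq κ]
    (base : Finset κ) (k₀ : ι) (P : κ → Prop) [DecidablePred P] :
    ((Fintype.piFinset fun _ : ι => base).filter fun f => P (f k₀)).card
      = (base.filter P).card * base.card ^ (Fintype.card ι - 1) := by
  classical
  have hset : ((Fintype.piFinset fun _ : ι => base).filter fun f => P (f k₀))
      = Fintype.piFinset (fun i => if i = k₀ then base.filter P else base) := by
    ext f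
    simp only [Finset.mem_filter, Fintype.mem_piFinset]
    constructor
    · rintro ⟨h1, h2⟩ i
      by_cases hi : i = k₀
      · subst hi
        rw [if_pos rfl]
        exact Finset.mem_filter.2 ⟨h1 i, h2⟩
      · rw [if_neg hi]
        exact h1 i
    · intro h
      have hb : ∀ i, f i ∈ base := by
        intro i
        have hh := h i
        split_ifs at hh with h1
        · exact (Finset.mem_filter.1 hh).1
        · exact hh
      have hk0 := h k₀
      rw [if_pos rfl] at hk0
      exact ⟨hb, (Finset.mem_filter.1 hk0).2⟩
  rw [hset, Fintype.card_piFinset]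
  rw [← Finset.mul_prod_erase Finset.univ _ (Finset.mem_univ k₀)]
  rw [if_pos rfl]
  have hrest : ∀ x ∈ Finset.univ.erase k₀,
      (if x = k₀ then base.filter P else base).card = base.card := by
    intro x hx
    rw [if_neg (Finset.mem_erase.1 hx).1]
  rw [Finset.prod_congr rfl hrest, Finset.prod_const,
    Finset.card_erase_of_mem (Finset.mem_univ k₀), Finset.card_univ]

lemma card_filter_mem_powersetCard {α : Type*} [DecidableEq α] (S : Finset α) (p : α)
    (hp : p ∈ S) (e : ℕ) :
    ((Finset.powersetCard (e + 1) S).filter fun A => p ∈ A).card = (S.card - 1).choose e := by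
  have hbij : ((Finset.powersetCard (e + 1) S).filter fun A => p ∈ A).card
      = (Finset.powersetCard e (S.erase p)).card := by
    refine Finset.card_bij' (fun A _ => A.erase p) (fun B _ => insert p B) ?_ ?_ ?_ ?_
    · intro A hA
      have h := Finset.mem_filter.1 hA
      have h1 := Finset.mem_powersetCard.1 h.1
      refine Finset.mem_powersetCard.2 ⟨Finset.erase_subset_erase p h1.1, ?_⟩
      rw [Finset.card_erase_of_mem h.2, h1.2]
      omega
    · intro B hB
      have h1 := Finset.mem_powersetCard.1 hB
      have hpB : p ∉ B := fun hc => (Finset.notMem_erase p S) (h1.1 hc)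
      refine Finset.mem_filter.2 ⟨Finset.mem_powersetCard.2 ⟨?_, ?_⟩, Finset.mem_insert_self p B⟩
      · exact Finset.insert_subset hp (h1.1.trans (Finset.erase_subset p S))
      · rw [Finset.card_insert_of_notMem hpB, h1.2]
    · intro A hA
      exact Finset.insert_erase (Finset.mem_filter.1 hA).2
    · intro B hB
      have h1 := Finset.mem_powersetCard.1 hB
      have hpB : p ∉ B := fun hc => (Finset.notMem_erase p S) (h1.1 hc)
      exact Finset.erase_insert hpB
  rw [hbij, Finset.card_powersetCard, Finset.card_erase_of_mem hp]

lemma card_filter_not_mem_powersetCard {α : Type*} [DecidableEq α] (S : Finset α) (q : α)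
    (hq : q ∈ S) (k : ℕ) :
    ((Finset.powersetCard k S).filter fun A => q ∉ A).card = (S.card - 1).choose k := by
  have hset : ((Finset.powersetCard k S).filter fun A => q ∉ A)
      = Finset.powersetCard k (S.erase q) := by
    ext A
    simp only [Finset.mem_filter, Finset.mem_powersetCard, Finset.subset_erase]
    tauto
  rw [hset, Finset.card_powersetCard, Finset.card_erase_of_mem hq]

lemma card_filter_mem_not_mem_powersetCard {α : Type*} [DecidableEq α] (S : Finset α) {p q : α}
    (hp : p ∈ S) (hq : q ∈ S) (hpq : p ≠ q) (e : ℕ) :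
    ((Finset.powersetCard (e + 1) S).filter fun A => p ∈ A ∧ q ∉ A).card
      = (S.card - 2).choose e := by
  have h1 : ((Finset.powersetCard (e + 1) S).filter fun A => p ∈ A ∧ q ∉ A)
      = ((Finset.powersetCard (e + 1) (S.erase q)).filter fun A => p ∈ A) := by
    ext A
    simp only [Finset.mem_filter, Finset.mem_powersetCard, Finset.subset_erase]
    tauto
  rw [h1, card_filter_mem_powersetCard _ p (Finset.mem_erase.2 ⟨hpq, hp⟩) e,
    Finset.card_erase_of_mem hq, show S.card - 1 - 1 = S.card - 2 from by omega]

lemma choose_id1 (d : ℕ) : (2 * d + 1).choose (d + 1) = (2 * d + 1).choose d := by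
  have h := Nat.choose_symm (n := 2 * d + 1) (k := d + 1) (by omega)
  have h2 : 2 * d + 1 - (d + 1) = d := by omega
  rw [h2] at h
  omega

lemma choose_id2 (d : ℕ) : (2 * d + 2).choose (d + 1) = 2 * ((2 * d + 1).choose d) := by
  have h := Nat.choose_succ_succ' (2 * d + 1) d
  have h1 := choose_id1 d
  have hx : 2 * d + 2 = 2 * d + 1 + 1 := by omega
  rw [hx]
  omega

lemma choose_id3 (d : ℕ) :
    2 * (2 * d + 1) * ((2 * d).choose d) = (d + 1) * ((2 * d + 2).choose (d + 1)) := by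
  have h := Nat.add_one_mul_choose_eq (2 * d) d
  have h1 := choose_id1 d
  have h2 := choose_id2 d
  nlinarith [h, h1, h2]

/-! ### Basic lemmas about cuts -/

lemma cutWeight_nonneg {w : V → V → ℝ} (hnn : ∀ u v, 0 ≤ w u v) (X : Finset V) :
    0 ≤ cutWeight w X :=
  Finset.sum_nonneg fun _ _ => Finset.sum_nonneg fun _ _ => hnn _ _

lemma cutWeight_le_mac (w : V → V → ℝ) (X : Finset V) : cutWeight w X ≤ mac w :=
  Finset.le_sup' _ (Finset.mem_univ X)

lemma mac_nonneg {w : V → V → ℝ} (hnn : ∀ u v, 0 ≤ w u v) : 0 ≤ mac w := by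
  have h := cutWeight_le_mac w (∅ : Finset V)
  have h0 : cutWeight w (∅ : Finset V) = 0 := by simp [cutWeight]
  linarith

lemma totalWeight_nonneg {w : V → V → ℝ} (hnn : ∀ u v, 0 ≤ w u v) : 0 ≤ totalWeight w :=
  Finset.sum_nonneg fun _ _ => Finset.sum_nonneg fun _ _ => hnn _ _

lemma cutWeight_eq_sum (w : V → V → ℝ) (X : Finset V) :
    cutWeight w X = ∑ u, ∑ v, if u ∈ X ∧ v ∉ X then w u v else 0 := by
  classical
  have h1 : ∀ u : V, (∑ v, if u ∈ X ∧ v ∉ X then w u v else 0)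
      = if u ∈ X then (∑ y ∈ Xᶜ, w u y) else 0 := by
    intro u
    by_cases hu : u ∈ X
    · rw [if_pos hu]
      have : (∑ v, if u ∈ X ∧ v ∉ X then w u v else 0)
          = ∑ v, if v ∈ Xᶜ then w u v else 0 :=
        Finset.sum_congr rfl (fun v _ => by simp [hu, Finset.mem_compl])
      rw [this, Finset.sum_ite_mem, Finset.univ_inter]
    · rw [if_neg hu]
      exact Finset.sum_eq_zero fun v _ => by simp [hu]
  rw [Finset.sum_congr rfl (fun u _ => h1 u), Finset.sum_ite_mem, Finset.univ_inter]
  rfl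

lemma sum_cutWeight_eq {ι : Type*} [DecidableEq ι] (w : V → V → ℝ) (Ω : Finset ι)
    (X : ι → Finset V) :
    ∑ ω ∈ Ω, cutWeight w (X ω)
      = ∑ u, ∑ v, ((Ω.filter fun ω => u ∈ X ω ∧ v ∉ X ω).card : ℝ) * w u v := by
  classical
  calc ∑ ω ∈ Ω, cutWeight w (X ω)
      = ∑ ω ∈ Ω, ∑ u, ∑ v, (if u ∈ X ω ∧ v ∉ X ω then w u v else 0) :=
        Finset.sum_congr rfl fun ω _ => cutWeight_eq_sum w (X ω)
    _ = ∑ u, ∑ ω ∈ Ω, ∑ v, (if u ∈ X ω ∧ v ∉ X ω then w u v else 0) := Finset.sum_comm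
    _ = ∑ u, ∑ v, ∑ ω ∈ Ω, (if u ∈ X ω ∧ v ∉ X ω then w u v else 0) :=
        Finset.sum_congr rfl fun u _ => Finset.sum_comm
    _ = ∑ u, ∑ v, ((Ω.filter fun ω => u ∈ X ω ∧ v ∉ X ω).card : ℝ) * w u v := by
        refine Finset.sum_congr rfl fun u _ => Finset.sum_congr rfl fun v _ => ?_
        rw [← Finset.sum_filter, Finset.sum_const, nsmul_eq_mul]

lemma sum_cut_le_mac {ι : Type*} (w : V → V → ℝ) (Ω : Finset ι) (X : ι → Finset V) :
    ∑ ω ∈ Ω, cutWeight w (X ω) ≤ (Ω.card : ℝ) * mac w := by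
  have h := Finset.sum_le_card_nsmul Ω (fun ω => cutWeight w (X ω)) (mac w)
    (fun ω _ => cutWeight_le_mac w (X ω))
  simpa [nsmul_eq_mul] using h

/-! ### Strategy 1 : biased two-level cut -/

lemma strategy_one (ν e t : ℕ) (hν : 1 ≤ ν) (he : e ≤ ν)
    (w : V → V → ℝ) (hnn : ∀ u v, 0 ≤ w u v)
    (ℓ : V → ℕ) (harc : ∀ u v, 0 < w u v → ℓ u < ℓ v) :
    ((ν : ℝ) ^ 2 - (e : ℝ) ^ 2) * totalWeight w
      + 2 * (ν : ℝ) * (e : ℝ) * (∑ u, ∑ v, if ℓ u ≤ t ∧ t < ℓ v then w u v else 0)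
      ≤ 4 * (ν : ℝ) ^ 2 * mac w := by
  classical
  have hw0 : ∀ u v, ¬ 0 < w u v → w u v = 0 := fun u v h => le_antisymm (not_lt.1 h) (hnn u v)
  by_cases hcard : 2 ≤ Fintype.card V
  swap
  · -- subsingleton case : everything is zero
    have hc1 : Fintype.card V ≤ 1 := by omega
    have hsub : Subsingleton V := Fintype.card_le_one_iff_subsingleton.1 hc1
    have hzero : ∀ u v : V, w u v = 0 := by
      intro u v
      apply hw0
      intro h
      have := harc u v h
      rw [Subsingleton.elim u v] at this
      exact lt_irrefl _ this
    have hW : totalWeight w = 0 := by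
      unfold totalWeight; simp [hzero]
    have hC : (∑ u, ∑ v, if ℓ u ≤ t ∧ t < ℓ v then w u v else 0) = 0 := by
      simp [hzero]
    rw [hW, hC]
    have hmac := mac_nonneg (w := w) hnn
    nlinarith [sq_nonneg ((ν : ℝ))]
  · set n := Fintype.card V with hn
    set m := 2 * ν with hm
    set kk : V → ℕ := fun v => if ℓ v ≤ t then ν + e else ν - e with hkk
    have hkle : ∀ x, kk x ≤ m := by
      intro x
      simp only [hkk, hm]
      split_ifs <;> omega
    set Ω := Fintype.piFinset (fun _ : V => Finset.range m) with hΩ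
    set X : (V → ℕ) → Finset V := fun f => Finset.univ.filter (fun v => f v < kk v) with hX
    have hkcast : ∀ x, (kk x : ℝ) = if ℓ x ≤ t then (ν : ℝ) + e else (ν : ℝ) - e := by
      intro x
      simp only [hkk]
      split_ifs with h
      · push_cast; ring
      · push_cast [Nat.cast_sub he]; ring
    have hcount : ∀ u v : V, 0 < w u v →
        ((Ω.filter fun f => u ∈ X f ∧ v ∉ X f).card : ℝ)
          = (kk u : ℝ) * ((m : ℝ) - (kk v : ℝ)) * (m : ℝ) ^ (n - 2) := by
      intro u v huv
      have huv' : u ≠ v := by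
        intro h
        have := harc u v huv
        rw [h] at this
        exact lt_irrefl _ this
      have hfil : (Ω.filter fun f => u ∈ X f ∧ v ∉ X f)
          = Ω.filter fun f => f u < kk u ∧ ¬ f v < kk v := by
        apply Finset.filter_congr
        intro f _
        simp [hX]
      rw [hfil, hΩ, count_pi_two (Finset.range m) huv' (fun x => x < kk u) (fun x => ¬ x < kk v)]
      have h1 : ((Finset.range m).filter fun x => x < kk u) = Finset.range (kk u) := by
        ext x
        simp only [Finset.mem_filter, Finset.mem_range]
        have := hkle u
        omega
      have h2 : ((Finset.range m).filter fun x => ¬ x < kk v) = Finset.Ico (kk v) m := by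
        ext x
        simp only [Finset.mem_filter, Finset.mem_range, Finset.mem_Ico]
        omega
      rw [h1, h2, Nat.card_Ico]
      simp only [Finset.card_range]
      push_cast [Nat.cast_sub (hkle v)]
      ring
    have hA : ∑ f ∈ Ω, cutWeight w (X f) ≤ ((m : ℝ)) ^ n * mac w := by
      have h := sum_cut_le_mac w Ω X
      have hcardΩ : (Ω.card : ℝ) = (m : ℝ) ^ n := by
        rw [hΩ, Fintype.card_piFinset]
        simp [Finset.card_range, hn]
      rwa [hcardΩ] at h
    have hB : ∑ f ∈ Ω, cutWeight w (X f)
        = ∑ u, ∑ v, ((Ω.filter fun f => u ∈ X f ∧ v ∉ X f).card : ℝ) * w u v :=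
      sum_cutWeight_eq w Ω X
    have hper : ∀ u : V, ∀ v : V,
        (m : ℝ) ^ (n - 2) * ((((ν : ℝ) ^ 2 - (e : ℝ) ^ 2)
            + (if ℓ u ≤ t ∧ t < ℓ v then 2 * (ν : ℝ) * e else 0)) * w u v)
          ≤ ((Ω.filter fun f => u ∈ X f ∧ v ∉ X f).card : ℝ) * w u v := by
      intro u v
      by_cases huv : 0 < w u v
      · rw [hcount u v huv]
        have harcuv := harc u v huv
        have hmcast : (m : ℝ) = 2 * (ν : ℝ) := by rw [hm]; push_cast; ring
        have hcoef : (((ν : ℝ) ^ 2 - (e : ℝ) ^ 2)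
              + (if ℓ u ≤ t ∧ t < ℓ v then 2 * (ν : ℝ) * e else 0))
            ≤ (kk u : ℝ) * ((m : ℝ) - (kk v : ℝ)) := by
          rcases le_or_gt (ℓ u) t with hu | hu <;> rcases le_or_gt (ℓ v) t with hv | hv
          · rw [if_neg (by omega), hkcast u, hkcast v, if_pos hu, if_pos hv, hmcast]
            nlinarith [sq_nonneg ((e : ℝ))]
          · rw [if_pos ⟨hu, hv⟩, hkcast u, hkcast v, if_pos hu, if_neg (by omega), hmcast]
            nlinarith [sq_nonneg ((e : ℝ))]
          · omega
          · rw [if_neg (by omega), hkcast u, hkcast v, if_neg (by omega), if_neg (by omega),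
              hmcast]
            nlinarith [sq_nonneg ((e : ℝ))]
        calc (m : ℝ) ^ (n - 2) * ((((ν : ℝ) ^ 2 - (e : ℝ) ^ 2)
              + (if ℓ u ≤ t ∧ t < ℓ v then 2 * (ν : ℝ) * e else 0)) * w u v)
            ≤ (m : ℝ) ^ (n - 2) * (((kk u : ℝ) * ((m : ℝ) - (kk v : ℝ))) * w u v) := by
              apply mul_le_mul_of_nonneg_left
              · exact mul_le_mul_of_nonneg_right hcoef (le_of_lt huv)
              · positivity
          _ = (kk u : ℝ) * ((m : ℝ) - (kk v : ℝ)) * (m : ℝ) ^ (n - 2) * w u v := by ring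
      · rw [hw0 u v huv]
        simp
    have hsum : ∑ u, ∑ v, (m : ℝ) ^ (n - 2) * ((((ν : ℝ) ^ 2 - (e : ℝ) ^ 2)
          + (if ℓ u ≤ t ∧ t < ℓ v then 2 * (ν : ℝ) * e else 0)) * w u v)
        = (m : ℝ) ^ (n - 2) * (((ν : ℝ) ^ 2 - (e : ℝ) ^ 2) * totalWeight w
            + 2 * (ν : ℝ) * (e : ℝ) * (∑ u, ∑ v, if ℓ u ≤ t ∧ t < ℓ v then w u v else 0)) := by
      have hterm : ∀ u : V, ∀ v : V,
          (m : ℝ) ^ (n - 2) * ((((ν : ℝ) ^ 2 - (e : ℝ) ^ 2)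
              + (if ℓ u ≤ t ∧ t < ℓ v then 2 * (ν : ℝ) * e else 0)) * w u v)
            = (m : ℝ) ^ (n - 2) * (((ν : ℝ) ^ 2 - (e : ℝ) ^ 2) * w u v)
              + (m : ℝ) ^ (n - 2) * (2 * (ν : ℝ) * (e : ℝ)
                  * (if ℓ u ≤ t ∧ t < ℓ v then w u v else 0)) := by
        intro u v
        split_ifs with h <;> ring
      calc ∑ u, ∑ v, (m : ℝ) ^ (n - 2) * ((((ν : ℝ) ^ 2 - (e : ℝ) ^ 2)
              + (if ℓ u ≤ t ∧ t < ℓ v then 2 * (ν : ℝ) * e else 0)) * w u v)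
          = ∑ u, ∑ v, ((m : ℝ) ^ (n - 2) * (((ν : ℝ) ^ 2 - (e : ℝ) ^ 2) * w u v)
              + (m : ℝ) ^ (n - 2) * (2 * (ν : ℝ) * (e : ℝ)
                  * (if ℓ u ≤ t ∧ t < ℓ v then w u v else 0))) := by
            exact Finset.sum_congr rfl fun u _ => Finset.sum_congr rfl fun v _ => hterm u v
        _ = (∑ u, ∑ v, (m : ℝ) ^ (n - 2) * (((ν : ℝ) ^ 2 - (e : ℝ) ^ 2) * w u v))
            + ∑ u, ∑ v, (m : ℝ) ^ (n - 2) * (2 * (ν : ℝ) * (e : ℝ)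
                  * (if ℓ u ≤ t ∧ t < ℓ v then w u v else 0)) := by
            rw [← Finset.sum_add_distrib]
            exact Finset.sum_congr rfl fun u _ => Finset.sum_add_distrib
        _ = (m : ℝ) ^ (n - 2) * (((ν : ℝ) ^ 2 - (e : ℝ) ^ 2) * totalWeight w
            + 2 * (ν : ℝ) * (e : ℝ) * (∑ u, ∑ v, if ℓ u ≤ t ∧ t < ℓ v then w u v else 0)) := by
            rw [totalWeight]
            simp only [← Finset.mul_sum]
            ring
    have hchain : (m : ℝ) ^ (n - 2) * (((ν : ℝ) ^ 2 - (e : ℝ) ^ 2) * totalWeight w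
          + 2 * (ν : ℝ) * (e : ℝ) * (∑ u, ∑ v, if ℓ u ≤ t ∧ t < ℓ v then w u v else 0))
        ≤ (m : ℝ) ^ n * mac w := by
      rw [← hsum]
      refine le_trans ?_ hA
      rw [hB]
      exact Finset.sum_le_sum fun u _ => Finset.sum_le_sum fun v _ => hper u v
    have hmn : (m : ℝ) ^ n = (m : ℝ) ^ (n - 2) * (m : ℝ) ^ 2 := by
      rw [← pow_add]
      congr 1
      omega
    rw [hmn] at hchain
    have hmpos : (0 : ℝ) < (m : ℝ) ^ (n - 2) := by
      apply pow_pos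
      rw [hm]
      push_cast
      positivity
    have h2 : ((ν : ℝ) ^ 2 - (e : ℝ) ^ 2) * totalWeight w
        + 2 * (ν : ℝ) * (e : ℝ) * (∑ u, ∑ v, if ℓ u ≤ t ∧ t < ℓ v then w u v else 0)
        ≤ (m : ℝ) ^ 2 * mac w := by
      have := (mul_le_mul_iff_right₀ hmpos).1 (by linarith [hchain] : (m : ℝ) ^ (n - 2)
        * (((ν : ℝ) ^ 2 - (e : ℝ) ^ 2) * totalWeight w
          + 2 * (ν : ℝ) * (e : ℝ) * (∑ u, ∑ v, if ℓ u ≤ t ∧ t < ℓ v then w u v else 0))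
        ≤ (m : ℝ) ^ (n - 2) * ((m : ℝ) ^ 2 * mac w))
      exact this
    have hm2 : ((m : ℝ)) ^ 2 = 4 * (ν : ℝ) ^ 2 := by
      rw [hm]; push_cast; ring
    rw [hm2] at h2
    exact h2


/-! ### Strategy 2 : blocks with balanced patterns -/

lemma strategy_two (ν d θ : ℕ) (hν : 1 ≤ ν) (hθ : θ < 2 * d + 2)
    (w : V → V → ℝ) (hnn : ∀ u v, 0 ≤ w u v)
    (ℓ : V → ℕ) (harc : ∀ u v, 0 < w u v → ℓ u < ℓ v) (hl : ∀ v, ℓ v ≤ ν) :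
    totalWeight w / 4
      + (∑ u, ∑ v, if (ℓ u + θ) / (2 * d + 2) = (ℓ v + θ) / (2 * d + 2) then w u v else 0)
          / (4 * (2 * (d : ℝ) + 2))
      ≤ mac w := by
  classical
  have hw0 : ∀ u v, ¬ 0 < w u v → w u v = 0 := fun u v h => le_antisymm (not_lt.1 h) (hnn u v)
  set B := ν + (2 * d + 2) with hB
  set K := (2 * d + 2).choose (d + 1) with hK
  have hKpos : 0 < K := Nat.choose_pos (by omega)
  have hKR : (0:ℝ) < (K : ℝ) := by exact_mod_cast hKpos
  set Bal := Finset.powersetCard (d + 1) (Finset.range (2 * d + 2)) with hBal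
  have hBalcard : Bal.card = K := by
    rw [hBal, Finset.card_powersetCard, Finset.card_range]
  have hblt : ∀ v : V, (ℓ v + θ) / (2 * d + 2) < B := by
    intro v
    have h1 : (ℓ v + θ) / (2 * d + 2) ≤ ℓ v + θ := Nat.div_le_self _ _
    have := hl v
    omega
  set bF : V → Fin B := fun v => ⟨(ℓ v + θ) / (2 * d + 2), hblt v⟩ with hbF
  set ps : V → ℕ := fun v => (ℓ v + θ) % (2 * d + 2) with hps
  have hpmem : ∀ v, ps v ∈ Finset.range (2 * d + 2) := by
    intro v
    simp only [hps, Finset.mem_range]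
    exact Nat.mod_lt _ (by omega)
  set Ω := Fintype.piFinset (fun _ : Fin B => Bal) with hΩ
  set X : (Fin B → Finset ℕ) → Finset V :=
    fun f => Finset.univ.filter (fun v => ps v ∈ f (bF v)) with hX
  have hNsame : ∀ u v : V, 0 < w u v → (ℓ u + θ) / (2 * d + 2) = (ℓ v + θ) / (2 * d + 2) →
      ((Ω.filter fun f => u ∈ X f ∧ v ∉ X f).card : ℝ)
        = ((2 * d).choose d : ℝ) * (K : ℝ) ^ (B - 1) := by
    intro u v huv hq
    have hij : ℓ u < ℓ v := harc u v huv
    have hbFuv : bF u = bF v := by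
      apply Fin.ext
      simpa [hbF] using hq
    have hpsne : ps u ≠ ps v := by
      intro hpe
      have h1 := Nat.div_add_mod (ℓ u + θ) (2 * d + 2)
      have h2 := Nat.div_add_mod (ℓ v + θ) (2 * d + 2)
      rw [hq] at h1
      simp only [hps] at hpe
      omega
    have hfil : (Ω.filter fun f => u ∈ X f ∧ v ∉ X f)
        = Ω.filter fun f => ps u ∈ f (bF u) ∧ ps v ∉ f (bF u) := by
      apply Finset.filter_congr
      intro f _
      simp [hX, hbFuv]
    rw [hfil, hΩ, count_pi_one Bal (bF u) (fun A => ps u ∈ A ∧ ps v ∉ A)]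
    have hc : (Bal.filter fun A => ps u ∈ A ∧ ps v ∉ A).card = (2 * d).choose d := by
      rw [hBal, card_filter_mem_not_mem_powersetCard (Finset.range (2 * d + 2))
        (hpmem u) (hpmem v) hpsne d, Finset.card_range,
        show 2 * d + 2 - 2 = 2 * d from by omega]
    rw [hc, hBalcard, Fintype.card_fin]
    push_cast
    ring
  have hNdiff : ∀ u v : V, 0 < w u v → ¬ (ℓ u + θ) / (2 * d + 2) = (ℓ v + θ) / (2 * d + 2) →
      ((Ω.filter fun f => u ∈ X f ∧ v ∉ X f).card : ℝ)
        = ((2 * d + 1).choose d : ℝ) * ((2 * d + 1).choose d : ℝ) * (K : ℝ) ^ (B - 2) := by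
    intro u v huv hq
    have hbFuv : bF u ≠ bF v := by
      intro hc
      apply hq
      simpa [hbF, Fin.ext_iff] using hc
    have hfil : (Ω.filter fun f => u ∈ X f ∧ v ∉ X f)
        = Ω.filter fun f => ps u ∈ f (bF u) ∧ ps v ∉ f (bF v) := by
      apply Finset.filter_congr
      intro f _
      simp [hX]
    rw [hfil, hΩ, count_pi_two Bal hbFuv (fun A => ps u ∈ A) (fun A => ps v ∉ A)]
    have hc1 : (Bal.filter fun A => ps u ∈ A).card = (2 * d + 1).choose d := by
      rw [hBal, card_filter_mem_powersetCard (Finset.range (2 * d + 2)) (ps u) (hpmem u) d,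
        Finset.card_range, show 2 * d + 2 - 1 = 2 * d + 1 from by omega]
    have hc2 : (Bal.filter fun A => ps v ∉ A).card = (2 * d + 1).choose d := by
      rw [hBal, card_filter_not_mem_powersetCard (Finset.range (2 * d + 2)) (ps v) (hpmem v)
        (d + 1), Finset.card_range, show 2 * d + 2 - 1 = 2 * d + 1 from by omega, choose_id1]
    rw [hc1, hc2, hBalcard, Fintype.card_fin]
    push_cast
    ring
  -- the per-pair lower bound
  have hper : ∀ u : V, ∀ v : V,
      ((K : ℝ) ^ B * (1 / 4)
          + (if (ℓ u + θ) / (2 * d + 2) = (ℓ v + θ) / (2 * d + 2)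
              then (K : ℝ) ^ B * (1 / (4 * (2 * (d : ℝ) + 2))) else 0)) * w u v
        ≤ ((Ω.filter fun f => u ∈ X f ∧ v ∉ X f).card : ℝ) * w u v := by
    intro u v
    by_cases huv : 0 < w u v
    · by_cases hq : (ℓ u + θ) / (2 * d + 2) = (ℓ v + θ) / (2 * d + 2)
      · rw [if_pos hq, hNsame u v huv hq]
        refine mul_le_mul_of_nonneg_right ?_ (le_of_lt huv)
        have hB1 : B - 1 + 1 = B := by omega
        have hKB : (K : ℝ) ^ B = (K : ℝ) ^ (B - 1) * (K : ℝ) := by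
          conv_lhs => rw [← hB1]
          rw [pow_succ]
        have h3 : 2 * (2 * (d : ℝ) + 1) * ((2 * d).choose d : ℝ) = ((d : ℝ) + 1) * (K : ℝ) := by
          exact_mod_cast choose_id3 d
        have hcore : (K : ℝ) * (1 / 4 + 1 / (4 * (2 * (d : ℝ) + 2))) ≤ ((2 * d).choose d : ℝ) := by
          have hd0 : (0:ℝ) < 2 * (d : ℝ) + 2 := by positivity
          have hd1 : (0:ℝ) < 2 * (d : ℝ) + 1 := by positivity
          have heq : (1 / 4 + 1 / (4 * (2 * (d : ℝ) + 2)))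
              = (2 * (d:ℝ) + 3) / (4 * (2 * (d:ℝ) + 2)) := by
            field_simp
            ring
          have hc : ((2 * d).choose d : ℝ) = ((d:ℝ) + 1) * (K:ℝ) / (2 * (2 * (d:ℝ) + 1)) := by
            rw [eq_div_iff (by positivity)]
            linear_combination h3
          rw [heq, hc, ← mul_div_assoc, div_le_div_iff₀ (by positivity) (by positivity)]
          nlinarith [hKR.le]
        calc (K : ℝ) ^ B * (1 / 4) + (K : ℝ) ^ B * (1 / (4 * (2 * (d : ℝ) + 2)))
            = ((K : ℝ) * (1 / 4 + 1 / (4 * (2 * (d : ℝ) + 2)))) * (K : ℝ) ^ (B - 1) := by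
              rw [hKB]; ring
          _ ≤ ((2 * d).choose d : ℝ) * (K : ℝ) ^ (B - 1) := by
              refine mul_le_mul_of_nonneg_right hcore (by positivity)
      · rw [if_neg hq, hNdiff u v huv hq, add_zero]
        refine mul_le_mul_of_nonneg_right (le_of_eq ?_) (le_of_lt huv)
        have hB2 : B - 2 + 2 = B := by omega
        have hKB : (K : ℝ) ^ B = (K : ℝ) ^ (B - 2) * (K : ℝ) * (K : ℝ) := by
          conv_lhs => rw [← hB2]
          rw [pow_add]
          ring
        have h2 : (K : ℝ) = 2 * ((2 * d + 1).choose d : ℝ) := by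
          exact_mod_cast choose_id2 d
        rw [hKB, h2]
        ring
    · rw [hw0 u v huv, mul_zero, mul_zero]
  -- summing
  set Win := ∑ u, ∑ v, (if (ℓ u + θ) / (2 * d + 2) = (ℓ v + θ) / (2 * d + 2) then w u v else 0)
    with hWin
  have hsum : ∑ u, ∑ v, ((K : ℝ) ^ B * (1 / 4)
          + (if (ℓ u + θ) / (2 * d + 2) = (ℓ v + θ) / (2 * d + 2)
              then (K : ℝ) ^ B * (1 / (4 * (2 * (d : ℝ) + 2))) else 0)) * w u v
      = (K : ℝ) ^ B * (totalWeight w / 4 + Win / (4 * (2 * (d : ℝ) + 2))) := by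
    have hterm : ∀ u : V, ∀ v : V,
        ((K : ℝ) ^ B * (1 / 4)
          + (if (ℓ u + θ) / (2 * d + 2) = (ℓ v + θ) / (2 * d + 2)
              then (K : ℝ) ^ B * (1 / (4 * (2 * (d : ℝ) + 2))) else 0)) * w u v
        = (K : ℝ) ^ B * (1 / 4) * w u v
          + (K : ℝ) ^ B * (1 / (4 * (2 * (d : ℝ) + 2)))
            * (if (ℓ u + θ) / (2 * d + 2) = (ℓ v + θ) / (2 * d + 2) then w u v else 0) := by
      intro u v
      split_ifs with h <;> ring
    calc ∑ u, ∑ v, ((K : ℝ) ^ B * (1 / 4)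
          + (if (ℓ u + θ) / (2 * d + 2) = (ℓ v + θ) / (2 * d + 2)
              then (K : ℝ) ^ B * (1 / (4 * (2 * (d : ℝ) + 2))) else 0)) * w u v
        = ∑ u, ∑ v, ((K : ℝ) ^ B * (1 / 4) * w u v
          + (K : ℝ) ^ B * (1 / (4 * (2 * (d : ℝ) + 2)))
            * (if (ℓ u + θ) / (2 * d + 2) = (ℓ v + θ) / (2 * d + 2) then w u v else 0)) :=
          Finset.sum_congr rfl fun u _ => Finset.sum_congr rfl fun v _ => hterm u v
      _ = (∑ u, ∑ v, (K : ℝ) ^ B * (1 / 4) * w u v)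
          + ∑ u, ∑ v, (K : ℝ) ^ B * (1 / (4 * (2 * (d : ℝ) + 2)))
            * (if (ℓ u + θ) / (2 * d + 2) = (ℓ v + θ) / (2 * d + 2) then w u v else 0) := by
          rw [← Finset.sum_add_distrib]
          exact Finset.sum_congr rfl fun u _ => Finset.sum_add_distrib
      _ = (K : ℝ) ^ B * (totalWeight w / 4 + Win / (4 * (2 * (d : ℝ) + 2))) := by
          rw [totalWeight, hWin]
          simp only [← Finset.mul_sum]
          ring
  have hcardΩ : (Ω.card : ℝ) = (K : ℝ) ^ B := by
    rw [hΩ, Fintype.card_piFinset]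
    simp [hBalcard, Fintype.card_fin]
  have hchain : (K : ℝ) ^ B * (totalWeight w / 4 + Win / (4 * (2 * (d : ℝ) + 2)))
      ≤ (K : ℝ) ^ B * mac w := by
    rw [← hsum]
    calc ∑ u, ∑ v, ((K : ℝ) ^ B * (1 / 4)
          + (if (ℓ u + θ) / (2 * d + 2) = (ℓ v + θ) / (2 * d + 2)
              then (K : ℝ) ^ B * (1 / (4 * (2 * (d : ℝ) + 2))) else 0)) * w u v
        ≤ ∑ u, ∑ v, ((Ω.filter fun f => u ∈ X f ∧ v ∉ X f).card : ℝ) * w u v :=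
          Finset.sum_le_sum fun u _ => Finset.sum_le_sum fun v _ => hper u v
      _ = ∑ f ∈ Ω, cutWeight w (X f) := (sum_cutWeight_eq w Ω X).symm
      _ ≤ (Ω.card : ℝ) * mac w := sum_cut_le_mac w Ω X
      _ = (K : ℝ) ^ B * mac w := by rw [hcardΩ]
  have hKBpos : (0:ℝ) < (K : ℝ) ^ B := by positivity
  exact (mul_le_mul_iff_right₀ hKBpos).1 hchain

/-! ### swap helper -/

lemma sum_sum_ite_swap {ι : Type*} [DecidableEq ι] (w : V → V → ℝ) (T : Finset ι)
    (P : ι → V → V → Prop) [∀ t u v, Decidable (P t u v)] :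
    ∑ t ∈ T, (∑ u, ∑ v, if P t u v then w u v else 0)
      = ∑ u, ∑ v, ((T.filter fun t => P t u v).card : ℝ) * w u v := by
  classical
  calc ∑ t ∈ T, ∑ u, ∑ v, (if P t u v then w u v else 0)
      = ∑ u, ∑ t ∈ T, ∑ v, (if P t u v then w u v else 0) := Finset.sum_comm
    _ = ∑ u, ∑ v, ∑ t ∈ T, (if P t u v then w u v else 0) :=
        Finset.sum_congr rfl fun u _ => Finset.sum_comm
    _ = _ := by
        refine Finset.sum_congr rfl fun u _ => Finset.sum_congr rfl fun v _ => ?_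
        rw [← Finset.sum_filter, Finset.sum_const, nsmul_eq_mul]

/-! ### numeric facts -/

lemma two_le_tau : (2:ℝ) ≤ (3:ℝ) ^ ((2:ℝ)/3) := by
  have h0 : (0:ℝ) ≤ (3:ℝ) := by norm_num
  have h1 : ((3:ℝ) ^ ((2:ℝ)/3)) ^ (3:ℕ) = 9 := by
    rw [← Real.rpow_natCast ((3:ℝ) ^ ((2:ℝ)/3)) 3, ← Real.rpow_mul h0]
    norm_num
  nlinarith [h1, Real.rpow_nonneg h0 ((2:ℝ)/3), sq_nonneg ((3:ℝ) ^ ((2:ℝ)/3) + 1)]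

/-! ### The abstract bound, given a level function -/

set_option maxHeartbeats 1600000 in
lemma abstract_bound [Nonempty V] (ν : ℕ) (hν2 : 2 ≤ ν) (w : V → V → ℝ)
    (hnn : ∀ u v, 0 ≤ w u v) (ℓ : V → ℕ)
    (hl1 : ∀ v, 1 ≤ ℓ v) (hl2 : ∀ v, ℓ v ≤ ν)
    (harc : ∀ u v, 0 < w u v → ℓ u < ℓ v) :
    (1 / 4 + (1 / (8 * (3 : ℝ) ^ ((2 : ℝ) / 3))) * (ν : ℝ) ^ (-(2 : ℝ) / 3)) * totalWeight w
      ≤ mac w := by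
  classical
  have hw0' : ∀ u v, ¬ 0 < w u v → w u v = 0 := fun u v h => le_antisymm (not_lt.1 h) (hnn u v)
  have hν1 : 1 ≤ ν := by omega
  have hν0 : (0:ℝ) < (ν:ℝ) := by exact_mod_cast hν1
  have hν1R : (1:ℝ) ≤ (ν:ℝ) := by exact_mod_cast hν1
  set W := totalWeight w with hW
  have hW0 : 0 ≤ W := totalWeight_nonneg hnn
  set τ := (3:ℝ) ^ ((2:ℝ)/3) with hτ
  have hτ2 : (2:ℝ) ≤ τ := two_le_tau
  have hτ0 : (0:ℝ) < τ := by linarith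
  set x := (ν:ℝ) ^ ((2:ℝ)/3) with hx
  have hx1 : (1:ℝ) ≤ x := by
    have := Real.rpow_le_rpow (by norm_num : (0:ℝ) ≤ 1) hν1R (by norm_num : (0:ℝ) ≤ (2:ℝ)/3)
    rwa [Real.one_rpow] at this
  have hx0 : (0:ℝ) < x := by linarith
  have hxν : x ≤ (ν:ℝ) := by
    have := Real.rpow_le_rpow_of_exponent_le hν1R (by norm_num : (2:ℝ)/3 ≤ 1)
    rwa [Real.rpow_one] at this
  set n23 := (ν : ℝ) ^ (-(2 : ℝ) / 3) with hn23def
  have hn23 : n23 = x⁻¹ := by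
    rw [hn23def, hx, show (-(2:ℝ)/3) = -((2:ℝ)/3) by ring, Real.rpow_neg (le_of_lt hν0)]
  have hn230 : (0:ℝ) < n23 := by
    rw [hn23]
    positivity
  have hxxν : n23 * ((ν:ℝ) * (ν:ℝ)) = x * x := by
    have e1 : (ν:ℝ) ^ (-(2:ℝ)/3) * ((ν:ℝ) ^ ((1:ℝ)) * (ν:ℝ) ^ ((1:ℝ)))
        = (ν:ℝ) ^ ((2:ℝ)/3) * (ν:ℝ) ^ ((2:ℝ)/3) := by
      rw [← Real.rpow_add hν0, ← Real.rpow_add hν0, ← Real.rpow_add hν0]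
      norm_num
    rw [Real.rpow_one] at e1
    rw [hn23def, hx]
    exact e1
  -- the block size
  set m := ⌈x⌉₊ with hm
  have hm1 : 1 ≤ m := Nat.one_le_ceil_iff.2 hx0
  set sN := if Even m then m else m + 1 with hsN
  have hsN2 : 2 ≤ sN := by
    rw [hsN]
    rcases Nat.even_or_odd m with h | h
    · rw [if_pos h]
      rcases h with ⟨c, hc⟩
      omega
    · rw [if_neg (Nat.not_even_iff_odd.2 h)]
      omega
  have hsNeven : Even sN := by
    rw [hsN]
    rcases Nat.even_or_odd m with h | h
    · rwa [if_pos h]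
    · rw [if_neg (Nat.not_even_iff_odd.2 h)]
      rcases h with ⟨c, hc⟩
      exact ⟨c + 1, by omega⟩
  obtain ⟨d, hd⟩ : ∃ d, sN = 2 * d + 2 := by
    rcases hsNeven with ⟨c, hc⟩
    exact ⟨c - 1, by omega⟩
  have hsx : x ≤ (sN:ℝ) := by
    have h1 : x ≤ (m:ℝ) := Nat.le_ceil x
    have h2 : (m:ℝ) ≤ (sN:ℝ) := by
      have : m ≤ sN := by
        rw [hsN]
        split_ifs <;> omega
      exact_mod_cast this
    linarith
  have hsx2 : (sN:ℝ) ≤ x + 2 := by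
    have h1 : (m:ℝ) < x + 1 := Nat.ceil_lt_add_one (le_of_lt hx0)
    have h2 : sN ≤ m + 1 := by
      rw [hsN]
      split_ifs <;> omega
    have h3 : (sN:ℝ) ≤ (m:ℝ) + 1 := by exact_mod_cast h2
    linarith
  have hsνN : sN ≤ ν + 2 := by
    have : (sN:ℝ) ≤ (ν:ℝ) + 2 := by linarith
    exact_mod_cast this
  have he : d + 1 ≤ ν := by omega
  -- key bound : sN ≤ τ x
  have hkey : (sN:ℝ) ≤ τ * x := by
    by_cases h3ν : 3 ≤ ν
    · have hτx : τ ≤ x := by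
        rw [hτ, hx]
        exact Real.rpow_le_rpow (by norm_num) (by exact_mod_cast h3ν) (by norm_num)
      nlinarith
    · -- ν = 2
      have hν2' : ν = 2 := by omega
      have hxle2 : x ≤ 2 := by
        rw [hx, hν2']
        have := Real.rpow_le_rpow_of_exponent_le (by norm_num : (1:ℝ) ≤ 2)
          (by norm_num : (2:ℝ)/3 ≤ 1)
        rwa [Real.rpow_one] at this
      have hx1' : (1:ℝ) < x := by
        rw [hx, hν2']
        have := Real.rpow_lt_rpow (by norm_num : (0:ℝ) ≤ 1) (by norm_num : (1:ℝ) < 2)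
          (by norm_num : (0:ℝ) < (2:ℝ)/3)
        rwa [Real.one_rpow] at this
      have hm2 : m = 2 := by
        have hub : m ≤ 2 := Nat.ceil_le.2 (by exact_mod_cast hxle2)
        have hlb : 2 ≤ m := by
          have := Nat.add_one_le_ceil_iff.2 (by exact_mod_cast hx1' : ((1:ℕ):ℝ) < x)
          omega
        omega
      have hsN2' : sN = 2 := by
        rw [hsN, hm2]
        norm_num
      rw [hsN2']
      push_cast
      nlinarith [hτ2, hx1]
  -- threshold cut weights
  set cutL : ℕ → ℝ := fun t => ∑ u, ∑ v, if ℓ u ≤ t ∧ t < ℓ v then w u v else 0 with hcutL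
  by_cases hcase : ∃ t ∈ Finset.Ico 1 ν, (sN:ℝ) * W ≤ 2 * (ν:ℝ) * cutL t
  · -- Case 1 : big threshold cut
    obtain ⟨t, _, hct⟩ := hcase
    have hstrat := strategy_one ν (d + 1) t hν1 he w hnn ℓ harc
    have hcb : cutL t = ∑ u, ∑ v, if ℓ u ≤ t ∧ t < ℓ v then w u v else 0 := rfl
    rw [← hcb, ← hW] at hstrat
    push_cast at hstrat
    have hsd : (sN:ℝ) = 2 * ((d:ℝ) + 1) := by
      rw [hd]; push_cast; ring
    rw [hsd] at hct
    have hmain : ((ν:ℝ) * (ν:ℝ) + ((d:ℝ) + 1) * ((d:ℝ) + 1)) * W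
        ≤ 4 * ((ν:ℝ) * (ν:ℝ)) * mac w := by
      have h1 : ((d:ℝ) + 1) * (2 * ((d:ℝ) + 1) * W) ≤ ((d:ℝ) + 1) * (2 * (ν:ℝ) * cutL t) :=
        mul_le_mul_of_nonneg_left hct (by positivity)
      nlinarith [hstrat, h1]
    have hcoef : (1 / 4 + (1 / (8 * τ)) * n23) * (4 * ((ν:ℝ) * (ν:ℝ)))
        ≤ (ν:ℝ) * (ν:ℝ) + ((d:ℝ) + 1) * ((d:ℝ) + 1) := by
      have hc16 : 1 / (8 * τ) ≤ 1 / 16 := by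
        apply one_div_le_one_div_of_le
        · norm_num
        · linarith
      have hxe : x ≤ 2 * ((d:ℝ) + 1) := by
        rw [← hsd]; exact hsx
      have hxx4 : x * x ≤ 4 * (((d:ℝ) + 1) * ((d:ℝ) + 1)) := by nlinarith
      have hA : (1 / (8 * τ)) * n23 * (4 * ((ν:ℝ) * (ν:ℝ)))
          = (1 / (8 * τ)) * (4 * (x * x)) := by
        rw [mul_assoc, show n23 * (4 * ((ν:ℝ) * (ν:ℝ))) = 4 * (n23 * ((ν:ℝ) * (ν:ℝ))) by ring,
          hxxν]
      have hB : (1 / (8 * τ)) * (4 * (x * x)) ≤ (1 / 16) * (4 * (x * x)) :=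
        mul_le_mul_of_nonneg_right hc16 (by positivity)
      nlinarith [hA, hB, hxx4]
    have h4 : (0:ℝ) < 4 * ((ν:ℝ) * (ν:ℝ)) := by positivity
    have h5 : (4 * ((ν:ℝ) * (ν:ℝ)))
        * ((1 / 4 + (1 / (8 * τ)) * n23) * W)
        ≤ (4 * ((ν:ℝ) * (ν:ℝ))) * mac w := by
      have h6 := mul_le_mul_of_nonneg_right hcoef hW0
      nlinarith [hmain, h6]
    exact (mul_le_mul_iff_right₀ h4).1 h5
  · -- Case 2 : all threshold cuts small
    push_neg at hcase
    set Sr := ∑ t ∈ Finset.Ico 1 ν, cutL t with hSr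
    have hSrle : Sr ≤ (sN:ℝ) * W / 2 := by
      have h1 : ∀ t ∈ Finset.Ico 1 ν, cutL t ≤ (sN:ℝ) * W / (2 * (ν:ℝ)) := by
        intro t ht
        have := hcase t ht
        rw [le_div_iff₀ (by positivity : (0:ℝ) < 2 * (ν:ℝ))]
        nlinarith
      have h2 := Finset.sum_le_card_nsmul _ _ _ h1
      rw [Nat.card_Ico] at h2
      have h3 : ((ν - 1 : ℕ):ℝ) ≤ (ν:ℝ) := by
        have : (ν - 1 : ℕ) ≤ ν := by omega
        exact_mod_cast this
      have h4 : (0:ℝ) ≤ (sN:ℝ) * W / (2 * (ν:ℝ)) := by positivity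
      have h5 : Sr ≤ ((ν - 1 : ℕ):ℝ) * ((sN:ℝ) * W / (2 * (ν:ℝ))) := by
        simpa [nsmul_eq_mul] using h2
      have h6 : ((ν - 1 : ℕ):ℝ) * ((sN:ℝ) * W / (2 * (ν:ℝ)))
          ≤ (ν:ℝ) * ((sN:ℝ) * W / (2 * (ν:ℝ))) := mul_le_mul_of_nonneg_right h3 h4
      have h7 : (ν:ℝ) * ((sN:ℝ) * W / (2 * (ν:ℝ))) = (sN:ℝ) * W / 2 := by
        field_simp
      linarith
    -- crossing weights
    set crossR : ℕ → ℝ := fun θ =>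
      ∑ u, ∑ v, if ¬ (ℓ u + θ) / sN = (ℓ v + θ) / sN then w u v else 0 with hcrossR
    have hcross_sum : ∑ θ ∈ Finset.range sN, crossR θ ≤ Sr := by
      have e1 : ∑ θ ∈ Finset.range sN, crossR θ
          = ∑ u, ∑ v, (((Finset.range sN).filter
              fun θ => ¬ (ℓ u + θ) / sN = (ℓ v + θ) / sN).card : ℝ) * w u v :=
        sum_sum_ite_swap w (Finset.range sN)
          (fun θ u v => ¬ (ℓ u + θ) / sN = (ℓ v + θ) / sN)
      have e2 : Sr = ∑ u, ∑ v, (((Finset.Ico 1 ν).filter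
              fun t => ℓ u ≤ t ∧ t < ℓ v).card : ℝ) * w u v :=
        sum_sum_ite_swap w (Finset.Ico 1 ν) (fun t u v => ℓ u ≤ t ∧ t < ℓ v)
      rw [e1, e2]
      refine Finset.sum_le_sum fun u _ => Finset.sum_le_sum fun v _ => ?_
      by_cases huv : 0 < w u v
      · have hij := harc u v huv
        have hIco : ((Finset.Ico 1 ν).filter fun t => ℓ u ≤ t ∧ t < ℓ v)
            = Finset.Ico (ℓ u) (ℓ v) := by
          ext t
          simp only [Finset.mem_filter, Finset.mem_Ico]
          have := hl1 u
          have := hl2 v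
          omega
        have hcard := card_ne_div_le sN (by omega) (le_of_lt hij)
        rw [hIco, Nat.card_Ico]
        have hcast : (((Finset.range sN).filter
            fun θ => ¬ (ℓ u + θ) / sN = (ℓ v + θ) / sN).card : ℝ) ≤ ((ℓ v - ℓ u : ℕ):ℝ) := by
          exact_mod_cast hcard
        exact mul_le_mul_of_nonneg_right hcast (le_of_lt huv)
      · rw [hw0' u v huv]
        simp
    have hrangene : (Finset.range sN).Nonempty := ⟨0, Finset.mem_range.2 (by omega)⟩
    have hsN0R : (0:ℝ) < (sN:ℝ) := by
      exact_mod_cast (by omega : 0 < sN)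
    have havg : ∑ θ ∈ Finset.range sN, crossR θ ≤ ∑ _θ ∈ Finset.range sN, Sr / (sN:ℝ) := by
      rw [Finset.sum_const, Finset.card_range, nsmul_eq_mul]
      have h7 : (sN:ℝ) * (Sr / (sN:ℝ)) = Sr := by
        field_simp
      rw [h7]
      exact hcross_sum
    obtain ⟨θ, hθmem, hθle⟩ := Finset.exists_le_of_sum_le hrangene havg
    have hθlt : θ < 2 * d + 2 := by
      rw [← hd]
      exact Finset.mem_range.1 hθmem
    have hstrat := strategy_two ν d θ hν1 hθlt w hnn ℓ harc hl2
    rw [← hW] at hstrat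
    set Win := ∑ u, ∑ v, (if (ℓ u + θ) / (2 * d + 2) = (ℓ v + θ) / (2 * d + 2) then w u v else 0)
      with hWin
    have hsplit : Win + crossR θ = W := by
      rw [hWin, hcrossR, hW, totalWeight, ← Finset.sum_add_distrib]
      refine Finset.sum_congr rfl fun u _ => ?_
      rw [← Finset.sum_add_distrib]
      refine Finset.sum_congr rfl fun v _ => ?_
      rw [hd]
      split_ifs with h
      · ring
      · ring
    have hcrossθ : crossR θ ≤ W / 2 := by
      have h1 : Sr / (sN:ℝ) ≤ W / 2 := by
        rw [div_le_div_iff₀ (by positivity : (0:ℝ) < (sN:ℝ)) (by norm_num : (0:ℝ) < 2)]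
        nlinarith [hSrle]
      linarith
    have hWin2 : W / 2 ≤ Win := by linarith
    -- final numeric step
    have hfin : (1 / 4 + (1 / (8 * τ)) * n23) * W ≤ W / 4 + Win / (4 * (2 * (d:ℝ) + 2)) := by
      have hsd : ((2:ℝ) * (d:ℝ) + 2) = (sN:ℝ) := by
        rw [hd]; push_cast; ring
      rw [hsd]
      have hc : (1 / (8 * τ)) * n23 ≤ 1 / (8 * (sN:ℝ)) := by
        rw [hn23]
        have h1 : (1 / (8 * τ)) * x⁻¹ = 1 / (8 * τ * x) := by
          field_simp
        rw [h1]
        apply one_div_le_one_div_of_le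
        · positivity
        · nlinarith [hkey]
      have h2 : (1 / (8 * (sN:ℝ))) * W ≤ Win / (4 * (sN:ℝ)) := by
        rw [div_mul_eq_mul_div, div_le_div_iff₀ (by positivity) (by positivity)]
        nlinarith [hWin2, hsN0R]
      have h3 : (1 / (8 * τ) * n23) * W ≤ (1 / (8 * (sN:ℝ))) * W :=
        mul_le_mul_of_nonneg_right hc hW0
      have h4 : (1/4 : ℝ) * W = W / 4 := by ring
      nlinarith [h3, h2]
    calc (1 / 4 + (1 / (8 * τ)) * n23) * W ≤ W / 4 + Win / (4 * (2 * (d:ℝ) + 2)) := hfin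
      _ ≤ mac w := hstrat


/-! ### Longest-path levels -/

/-- There is a directed path with `p+1` vertices ending at `v`. -/
def PE (w : V → V → ℝ) (p : ℕ) (v : V) : Prop :=
  ∃ f : Fin (p + 1) → V, Function.Injective f ∧
    (∀ (i : ℕ) (h : i + 1 < p + 1), 0 < w (f ⟨i, Nat.lt_of_succ_lt h⟩) (f ⟨i + 1, h⟩)) ∧
    f (Fin.last p) = v

lemma PE_zero (w : V → V → ℝ) (v : V) : PE w 0 v := by
  refine ⟨fun _ => v, ?_, ?_, rfl⟩
  · intro a b _
    exact Fin.ext (by omega)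
  · intro i h
    omega

lemma PE_isPathOrder {w : V → V → ℝ} {p : ℕ} {v : V} (h : PE w p v) :
    IsPathOrder w (p + 1) := by
  obtain ⟨f, hinj, harc, _⟩ := h
  exact ⟨f, hinj, harc⟩

lemma PE_extend {w : V → V → ℝ} (hacyc : Acyclic w) {p : ℕ} {u v : V}
    (h : PE w p u) (huv : 0 < w u v) : PE w (p + 1) v := by
  obtain ⟨f, hinj, harc, hlast⟩ := h
  have hvr : ∀ k : Fin (p + 1), f k ≠ v := by
    intro k hk
    apply hacyc
    refine ⟨p + 1 - k.val, fun n => if h : k.val + n ≤ p then f ⟨k.val + n, by omega⟩ else v,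
      by omega, ?_, ?_⟩
    · have h0 : k.val + 0 ≤ p := by omega
      have h1 : ¬ k.val + (p + 1 - k.val) ≤ p := by omega
      beta_reduce
      rw [dif_neg h1, dif_pos h0]
      have : (⟨k.val + 0, by omega⟩ : Fin (p + 1)) = k := Fin.ext (by simp)
      rw [this]
      exact hk.symm
    · intro i hi
      by_cases hip : k.val + i < p
      · beta_reduce
        rw [dif_pos (by omega : k.val + i ≤ p), dif_pos (by omega : k.val + (i + 1) ≤ p)]
        exact harc (k.val + i) (by omega)
      · have hkip : k.val + i = p := by omega
        beta_reduce
        rw [dif_pos (by omega : k.val + i ≤ p), dif_neg (by omega : ¬ k.val + (i + 1) ≤ p)]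
        have e1 : (⟨k.val + i, by omega⟩ : Fin (p + 1)) = Fin.last p := Fin.ext (by
          simp [hkip])
        rw [e1, hlast]
        exact huv
  refine ⟨Fin.snoc f v, ?_, ?_, ?_⟩
  · intro a b hab
    rcases Fin.eq_castSucc_or_eq_last a with ⟨a', rfl⟩ | rfl
    · rcases Fin.eq_castSucc_or_eq_last b with ⟨b', rfl⟩ | rfl
      · rw [Fin.snoc_castSucc, Fin.snoc_castSucc] at hab
        rw [hinj hab]
      · rw [Fin.snoc_castSucc, Fin.snoc_last] at hab
        exact absurd hab (hvr a')
    · rcases Fin.eq_castSucc_or_eq_last b with ⟨b', rfl⟩ | rfl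
      · rw [Fin.snoc_last, Fin.snoc_castSucc] at hab
        exact absurd hab.symm (hvr b')
      · rfl
  · intro i hi
    by_cases hip : i + 1 < p + 1
    · have e1 : (⟨i, Nat.lt_of_succ_lt hi⟩ : Fin (p + 2))
          = Fin.castSucc (⟨i, Nat.lt_of_succ_lt hip⟩ : Fin (p + 1)) := rfl
      have e2 : (⟨i + 1, hi⟩ : Fin (p + 2))
          = Fin.castSucc (⟨i + 1, hip⟩ : Fin (p + 1)) := rfl
      rw [e1, e2, Fin.snoc_castSucc, Fin.snoc_castSucc]
      exact harc i hip
    · have hip' : i = p := by omega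
      have e1 : (⟨i, Nat.lt_of_succ_lt hi⟩ : Fin (p + 2)) = Fin.castSucc (Fin.last p) :=
        Fin.ext (by simp [hip'])
      have e2 : (⟨i + 1, hi⟩ : Fin (p + 2)) = Fin.last (p + 1) := Fin.ext (by simp [hip'])
      rw [e1, e2, Fin.snoc_castSucc, Fin.snoc_last, hlast]
      exact huv
  · exact Fin.snoc_last _ _

theorem bounded_path_lower_bound (ν : ℕ) (hν1 : 1 ≤ ν)
    {V : Type*} [Fintype V] [Nonempty V]
    (w : V → V → ℝ) (hnn : ∀ u v, 0 ≤ w u v) (hdiag : ∀ v, w v v = 0)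
    (hacyc : Acyclic w)
    (hν : IsGreatest {p : ℕ | IsPathOrder w p} ν) :
    (1 / 4 + (1 / (8 * (3 : ℝ) ^ ((2 : ℝ) / 3))) * (ν : ℝ) ^ (-(2 : ℝ) / 3)) * totalWeight w
      ≤ mac w := by
  classical
  have hub : ∀ p, IsPathOrder w p → p ≤ ν := fun p hp => hν.2 hp
  by_cases hν' : ν = 1
  · -- trivial case : no arcs at all
    have hzero : ∀ u v : V, w u v = 0 := by
      intro u v
      by_contra h
      have huv : 0 < w u v := lt_of_le_of_ne (hnn u v) (Ne.symm h)
      have hne : u ≠ v := by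
        intro he
        rw [he, hdiag] at huv
        exact lt_irrefl _ huv
      have hpath : IsPathOrder w 2 := by
        refine ⟨![u, v], ?_, ?_⟩
        · intro a b hab
          fin_cases a <;> fin_cases b <;> simp_all
        · intro i h
          have hi : i = 0 := by omega
          subst hi
          simpa using huv
      have := hub 2 hpath
      omega
    have hW : totalWeight w = 0 := by
      unfold totalWeight
      simp [hzero]
    rw [hW, mul_zero]
    exact mac_nonneg hnn
  · have hν2 : 2 ≤ ν := by omega
    haveI : ∀ v : V, DecidablePred fun p => PE w p v := fun _ _ => Classical.propDecidable _
    set ℓ₀ : V → ℕ := fun v => Nat.findGreatest (fun p => PE w p v) ν with hℓ₀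
    have hspec : ∀ v, PE w (ℓ₀ v) v := by
      intro v
      exact Nat.findGreatest_spec (P := fun p => PE w p v) (m := 0) (by omega) (PE_zero w v)
    have hle : ∀ v, ℓ₀ v + 1 ≤ ν := fun v => hub _ (PE_isPathOrder (hspec v))
    have harc : ∀ u v, 0 < w u v → ℓ₀ u + 1 < ℓ₀ v + 1 := by
      intro u v huv
      have h1 : PE w (ℓ₀ u + 1) v := PE_extend hacyc (hspec u) huv
      have h2 : ℓ₀ u + 1 ≤ ν := by
        have := hub _ (PE_isPathOrder h1)
        omega
      have h3 : ℓ₀ u + 1 ≤ ℓ₀ v := Nat.le_findGreatest h2 h1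
      omega
    exact abstract_bound ν hν2 w hnn (fun v => ℓ₀ v + 1)
      (fun v => Nat.succ_le_succ (Nat.zero_le _)) (fun v => hle v) harc

end PaperStmt
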